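/- arXiv:2207.08113 — 4 statements merged into one kernel-verified Lean document; each statement's English description precedes it below -/
import Mathlib

section
/- Let E be a set and ξ̃ denote the signed square root map on ℓ¹(E, ℝ) (b_e = √c_e if c_e ≥ 0, b_e = -√|c_e| otherwise). Then for any ξ₁, ξ₂ ∈ ℓ¹(E, ℝ), ‖ξ̃₁ - ξ̃₂‖₂² ≤ 2‖ξ₁ - ξ₂‖₁. -/
/-- The signed square root of a real number. -/
noncomputable def signedSqrt (c : ℝ) : ℝ := if 0 ≤ c then Real.sqrt c else -Real.sqrt |c|

/-!
Pointwise, if `c₁, c₂` have the same sign the difference of the signed square roots is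
`√a - √b` with `|a - b| = |c₁ - c₂|`, and `(√a - √b)² ≤ |√a - √b| (√a + √b) = |a - b|`.
If they have opposite signs it is `±(√a + √b)` with `a + b = |c₁ - c₂|`, and
`(√a + √b)² ≤ 2 (a + b)`. The theorem is the sum of this pointwise bound over `E`.
-/

open Real

lemma sq_sqrt_sub_sqrt_le_abs_sub {a b : ℝ} (ha : 0 ≤ a) (hb : 0 ≤ b) :
    (√a - √b) ^ 2 ≤ |a - b| := by
  have hsum : |√a - √b| ≤ √a + √b := by
    simpa only [abs_of_nonneg (sqrt_nonneg _)] using abs_sub (√a) (√b)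
  calc (√a - √b) ^ 2 = |√a - √b| * |√a - √b| := by rw [← sq, sq_abs]
    _ ≤ |√a - √b| * (√a + √b) := mul_le_mul_of_nonneg_left hsum (abs_nonneg _)
    _ = |a - b| := by
      rw [← abs_of_nonneg (add_nonneg (sqrt_nonneg a) (sqrt_nonneg b)), ← abs_mul,
        mul_comm, ← sq_sub_sq, sq_sqrt ha, sq_sqrt hb]

lemma sq_sqrt_add_sqrt_le {a b : ℝ} (ha : 0 ≤ a) (hb : 0 ≤ b) :
    (√a + √b) ^ 2 ≤ 2 * (a + b) := by
  simpa only [sq_sqrt ha, sq_sqrt hb] using add_sq_le (a := √a) (b := √b)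

lemma signedSqrt_of_nonneg {c : ℝ} (hc : 0 ≤ c) : signedSqrt c = √c := if_pos hc

lemma signedSqrt_of_neg {c : ℝ} (hc : c < 0) : signedSqrt c = -√|c| := if_neg hc.not_ge

lemma sq_signedSqrt_sub_signedSqrt_le (c₁ c₂ : ℝ) :
    (signedSqrt c₁ - signedSqrt c₂) ^ 2 ≤ 2 * |c₁ - c₂| := by
  rcases le_or_gt 0 c₁ with h₁ | h₁ <;> rcases le_or_gt 0 c₂ with h₂ | h₂
  · rw [signedSqrt_of_nonneg h₁, signedSqrt_of_nonneg h₂]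
    exact (sq_sqrt_sub_sqrt_le_abs_sub h₁ h₂).trans
      (le_mul_of_one_le_left (abs_nonneg _) one_le_two)
  · rw [signedSqrt_of_nonneg h₁, signedSqrt_of_neg h₂, sub_neg_eq_add]
    calc _ ≤ 2 * (c₁ + |c₂|) := sq_sqrt_add_sqrt_le h₁ (abs_nonneg _)
      _ = 2 * |c₁ - c₂| := by rw [abs_of_neg h₂, abs_of_pos (by linarith)]; ring
  · rw [signedSqrt_of_neg h₁, signedSqrt_of_nonneg h₂, ← neg_add', neg_sq]
    calc _ ≤ 2 * (|c₁| + c₂) := sq_sqrt_add_sqrt_le (abs_nonneg _) h₂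
      _ = 2 * |c₁ - c₂| := by rw [abs_of_neg h₁, abs_of_neg (by linarith)]; ring
  · rw [signedSqrt_of_neg h₁, signedSqrt_of_neg h₂, neg_sub_neg]
    calc _ ≤ |(|c₂| - |c₁|)| := sq_sqrt_sub_sqrt_le_abs_sub (abs_nonneg _) (abs_nonneg _)
      _ ≤ 2 * |c₁ - c₂| := by
        rw [abs_of_neg h₁, abs_of_neg h₂, neg_sub_neg]
        exact le_mul_of_one_le_left (abs_nonneg _) one_le_two

theorem signedSqrt_diff_l2_le {E : Type*} (ξ₁ ξ₂ : E → ℝ)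
    (h₁ : Memℓp ξ₁ 1) (h₂ : Memℓp ξ₂ 1) :
    ∑' e, (signedSqrt (ξ₁ e) - signedSqrt (ξ₂ e)) ^ 2 ≤ 2 * ∑' e, |ξ₁ e - ξ₂ e| := by
  have hbound e := sq_signedSqrt_sub_signedSqrt_le (ξ₁ e) (ξ₂ e)
  have hsum : Summable fun e ↦ 2 * |ξ₁ e - ξ₂ e| :=
    ((h₁.summable_of_one.sub h₂.summable_of_one).abs).mul_left 2
  calc ∑' e, (signedSqrt (ξ₁ e) - signedSqrt (ξ₂ e)) ^ 2
      ≤ ∑' e, 2 * |ξ₁ e - ξ₂ e| :=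
        (Summable.of_nonneg_of_le (fun _ ↦ sq_nonneg _) hbound hsum).tsum_le_tsum hbound hsum
    _ = 2 * ∑' e, |ξ₁ e - ξ₂ e| := tsum_mul_left
end

section
/- Let G be a group and X₀ a generating set of G with X₀ = X₀⁻¹ and 1 ∈ X₀. Let X = X₀² = {gh : g, h ∈ X₀}. Then the Cayley graph Γ(G, X) (simple graph with vertex set G and edges between g and gs for s ∈ X \ {1}) is 2-vertex-connected, i.e. connected and remains connected after removing any single vertex, provided G has at least 3 elements. -/
/-!
If `H` is connected and `Γ` contains the square of `H` (every `H`-path of length two has its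
ends joined in `Γ`), then `Γ` stays connected after deleting a vertex `v`: an `H`-walk through
`v` enters along an edge `u - v` and leaves along `v - y`, and `Γ` lets it jump from `u` to `y`.
The Cayley graph on `X₀ * X₀` contains the square of the Cayley graph on `X₀` (here `X₀` is
symmetric and contains `1`), and the latter is connected because `X₀` generates `G`.
-/

open scoped Pointwise

namespace SimpleGraph

section Square

variable {V : Type*} {H Γ : SimpleGraph V}

theorem reachable_induce_compl_singleton_of_walk (hle : H ≤ Γ)
    (hsq : ∀ {u x y : V}, H.Adj u x → H.Adj x y → u ≠ y → Γ.Adj u y) {v : V} :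
    ∀ {u w : V} (_ : H.Walk u w) (hu : u ≠ v) (hw : w ≠ v),
      (Γ.induce {v}ᶜ).Reachable ⟨u, hu⟩ ⟨w, hw⟩
  | _, _, .nil, _, _ => .rfl
  | u, _, .cons (v := x) hux p, hu, hw => by
    by_cases hx : x = v
    · subst hx
      cases p with
      | nil => exact absurd rfl hw
      | @cons _ y _ hxy q =>
        have hy : y ≠ x := hxy.ne.symm
        have huy : (Γ.induce {x}ᶜ).Reachable ⟨u, hu⟩ ⟨y, hy⟩ := by
          by_cases h : u = y
          · subst h; rfl
          · exact Adj.reachable (hsq hux hxy h)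
        exact huy.trans (reachable_induce_compl_singleton_of_walk hle hsq q hy hw)
    · have hux' : (Γ.induce {v}ᶜ).Adj ⟨u, hu⟩ ⟨x, hx⟩ := hle hux
      exact hux'.reachable.trans (reachable_induce_compl_singleton_of_walk hle hsq p hx hw)

theorem Connected.induce_compl_singleton_of_square_le (hH : H.Connected) (hle : H ≤ Γ)
    (hsq : ∀ {u x y : V}, H.Adj u x → H.Adj x y → u ≠ y → Γ.Adj u y) (v : V)
    [Nonempty ({v}ᶜ : Set V)] : (Γ.induce {v}ᶜ).Connected := by
  refine Connected.mk ?_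
  rintro ⟨u, hu⟩ ⟨w, hw⟩
  exact reachable_induce_compl_singleton_of_walk hle hsq (hH.preconnected u w).some hu hw

end Square

section Cayley

variable {G : Type*} [Group G] {s : Set G}

theorem fromRel_inv_mul_mem_eq_mulCayley (s : Set G) :
    fromRel (fun g h : G => g⁻¹ * h ∈ s) = mulCayley s := by
  ext g h
  rw [fromRel_adj, mulCayley_adj]

theorem mulCayley_adj_of_inv_eq (hs : s⁻¹ = s) {g h : G} :
    (mulCayley s).Adj g h ↔ g ≠ h ∧ g⁻¹ * h ∈ s := by
  have hswap : h⁻¹ * g ∈ s ↔ g⁻¹ * h ∈ s := by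
    rw [← Set.inv_mem_inv, hs, mul_inv_rev, inv_inv]
  rw [mulCayley_adj, hswap, or_self]

theorem mulCayley_mul_adj_of_adj_of_adj (hs : s⁻¹ = s) {u x y : G}
    (hux : (mulCayley s).Adj u x) (hxy : (mulCayley s).Adj x y) (huy : u ≠ y) :
    (mulCayley (s * s)).Adj u y := by
  rw [mulCayley_adj_of_inv_eq hs] at hux hxy
  refine (mulCayley_adj _ u y).2 ⟨huy, Or.inl ?_⟩
  simpa [mul_assoc] using Set.mul_mem_mul hux.2 hxy.2

theorem Reachable.mulCayley_mul_left {a b : G} (d : G) (h : (mulCayley s).Reachable a b) :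
    (mulCayley s).Reachable (d * a) (d * b) :=
  h.map ⟨(d * ·), mulCayley_adj_mul_iff_right.2⟩

theorem mulCayley_connected_of_closure_eq_top (hs : Subgroup.closure s = ⊤) :
    (mulCayley s).Connected := by
  have hreach : ∀ g : G, (mulCayley s).Reachable 1 g := fun g => by
    induction (hs ▸ Subgroup.mem_top g : g ∈ Subgroup.closure s) using Subgroup.closure_induction
      with
    | mem x hx =>
      by_cases h : (1 : G) = x
      · rw [h]
      · exact Adj.reachable ((mulCayley_adj s 1 x).2 ⟨h, Or.inl (by simpa using hx)⟩)
    | one => rfl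
    | mul x y _ _ hx hy => exact hx.trans (by simpa using hy.mulCayley_mul_left x)
    | inv x _ hx => simpa using (hx.mulCayley_mul_left x⁻¹).symm
  have : Nonempty G := ⟨1⟩
  exact Connected.mk fun g h => by simpa using (hreach (g⁻¹ * h)).mulCayley_mul_left g

end Cayley

end SimpleGraph

open SimpleGraph in
theorem cayley_graph_two_vertex_connected {G : Type*} [Group G] (X₀ : Set G)
    (hgen : Subgroup.closure X₀ = ⊤) (hsymm : X₀⁻¹ = X₀) (hone : (1 : G) ∈ X₀)
    (hcard : ∃ a b c : G, a ≠ b ∧ a ≠ c ∧ b ≠ c) :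
    (SimpleGraph.fromRel (fun g h : G => g⁻¹ * h ∈ X₀ * X₀)).Connected ∧
    ∀ v : G,
      ((SimpleGraph.fromRel (fun g h : G => g⁻¹ * h ∈ X₀ * X₀)).induce {v}ᶜ).Connected := by
  rw [fromRel_inv_mul_mem_eq_mulCayley]
  have hconn := mulCayley_connected_of_closure_eq_top hgen
  have hle : mulCayley X₀ ≤ mulCayley (X₀ * X₀) := mulCayley_mono (Set.subset_mul_left X₀ hone)
  refine ⟨hconn.mono hle, fun v => ?_⟩
  obtain ⟨a, b, -, hab, -, -⟩ := hcard
  have : Nonempty ({v}ᶜ : Set G) := by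
    by_cases ha : a = v
    · exact ⟨⟨b, fun hb => hab (ha.trans hb.symm)⟩⟩
    · exact ⟨⟨a, ha⟩⟩
  exact hconn.induce_compl_singleton_of_square_le hle
    (mulCayley_mul_adj_of_adj_of_adj hsymm) v
end

section
/- Let Y be a connected simple graph, a, b ∈ V(Y) two vertices, p₁, …, p_N paths from a to b regarded as 1-chains (sums of oriented edges with coefficient 1), and α₁, …, α_N complex numbers. Then |Σⱼ αⱼ| · d_Y(a, b) ≤ ‖Σⱼ αⱼ pⱼ‖₁, where ‖·‖₁ is the ℓ¹-norm on 1-chains and d_Y is the graph metric. -/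
open scoped Classical
/-- The 1-chain associated to a walk: the coefficient of the oriented edge `x = (u,v)` is
the number of times the walk traverses `u → v` minus the number of times it traverses
`v → u` (so that `[v,u] = -[u,v]`). -/
noncomputable def walkChain {V : Type*} {Y : SimpleGraph V} {a b : V} (p : Y.Walk a b) :
    V × V → ℂ := fun x =>
  (p.darts.map (fun d => (if x = d.toProd then (1 : ℂ) else 0) -
    (if x = d.toProd.swap then 1 else 0))).sum

/-!
Pair a chain with the coboundary of the potential `v ↦ d_Y(a, v)`. By telescoping along its
darts, every walk from `a` to `b` pairs to `2 · d_Y(a, b)` (each edge appears in both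
orientations), so the combination pairs to `2 (Σ αⱼ) d_Y(a, b)`. The potential changes by at
most `1` across an edge, so the pairing is bounded by the `ℓ¹`-norm of the chain.
-/

open Finset

theorem Finset.sum_comm_list {ι κ M : Type*} [AddCommMonoid M] (s : Finset ι) (l : List κ)
    (g : κ → ι → M) : ∑ x ∈ s, (l.map (g · x)).sum = (l.map fun d => ∑ x ∈ s, g d x).sum := by
  induction l with
  | nil => simp
  | cons d l ih => simp [sum_add_distrib, ih]

theorem Finset.norm_sum_mul_le_sum_norm {ι R : Type*} [SeminormedRing R] {s : Finset ι}
    {c g : ι → R} (hg : ∀ x ∈ s, ‖g x‖ ≤ 1) : ‖∑ x ∈ s, c x * g x‖ ≤ ∑ x ∈ s, ‖c x‖ :=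
  (norm_sum_le _ _).trans <| sum_le_sum fun x hx =>
    (norm_mul_le _ _).trans <| mul_le_of_le_one_right (norm_nonneg _) (hg x hx)

namespace SimpleGraph

variable {V : Type*} {G : SimpleGraph V}

theorem Adj.abs_dist_sub_dist_le_one {v w : V} (h : G.Adj v w) (u : V) :
    |(G.dist u w : ℝ) - G.dist u v| ≤ 1 := by
  obtain ⟨h₁, h₂⟩ : G.dist u w ≤ G.dist u v + 1 ∧ G.dist u v ≤ G.dist u w + 1 := by
    have := h.diff_dist_adj (u := u)
    omega
  rw [abs_sub_le_iff, sub_le_iff_le_add', sub_le_iff_le_add']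
  exact ⟨by exact_mod_cast h₁, by exact_mod_cast h₂⟩

theorem Dart.sum_chain_mul_sub (d : G.Dart) {s : Finset (V × V)} (hd : d.toProd ∈ s)
    (hd' : d.toProd.swap ∈ s) (f : V → ℂ) :
    ∑ x ∈ s, ((if x = d.toProd then (1 : ℂ) else 0) - (if x = d.toProd.swap then 1 else 0)) *
      (f x.2 - f x.1) = 2 * (f d.snd - f d.fst) := by
  simp only [sub_mul, ite_mul, one_mul, zero_mul, sum_sub_distrib, sum_ite_eq', hd, hd', if_true,
    Prod.fst_swap, Prod.snd_swap]
  ring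

namespace Walk

variable {a b : V}

theorem sum_darts_sub {M : Type*} [AddCommGroup M] (p : G.Walk a b) (f : V → M) :
    (p.darts.map fun d => f d.snd - f d.fst).sum = f b - f a := by
  induction p with
  | nil => simp
  | cons h q ih => simp [ih]

noncomputable def chainSupport (p : G.Walk a b) : Finset (V × V) :=
  p.darts.toFinset.biUnion fun d => {d.toProd, d.toProd.swap}

theorem mem_chainSupport {p : G.Walk a b} {x : V × V} :
    x ∈ p.chainSupport ↔ ∃ d ∈ p.darts, x = d.toProd ∨ x = d.toProd.swap := by
  simp [chainSupport]

theorem walkChain_eq_zero_of_notMem_chainSupport {p : G.Walk a b} {x : V × V}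
    (hx : x ∉ p.chainSupport) : walkChain p x = 0 := by
  simp only [mem_chainSupport, not_exists, not_and, not_or] at hx
  exact List.sum_eq_zero fun y hy => by
    obtain ⟨d, hd, rfl⟩ := List.mem_map.1 hy
    simp [hx d hd]

theorem adj_of_mem_chainSupport {p : G.Walk a b} {x : V × V} (hx : x ∈ p.chainSupport) :
    G.Adj x.1 x.2 := by
  obtain ⟨d, -, rfl | rfl⟩ := mem_chainSupport.1 hx
  exacts [d.adj, d.adj.symm]

theorem sum_walkChain_mul_sub (p : G.Walk a b) (f : V → ℂ) {s : Finset (V × V)}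
    (hs : p.chainSupport ⊆ s) :
    ∑ x ∈ s, walkChain p x * (f x.2 - f x.1) = 2 * (f b - f a) := by
  have hd : ∀ d ∈ p.darts, d.toProd ∈ s ∧ d.toProd.swap ∈ s := fun d hd =>
    ⟨hs (mem_chainSupport.2 ⟨d, hd, .inl rfl⟩), hs (mem_chainSupport.2 ⟨d, hd, .inr rfl⟩)⟩
  simp only [walkChain, ← List.sum_map_mul_right, sum_comm_list]
  rw [List.map_congr_left fun d hd' => (d.sum_chain_mul_sub (hd d hd').1 (hd d hd').2 f),
    List.sum_map_mul_left, sum_darts_sub]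

end Walk

end SimpleGraph

open SimpleGraph

theorem abs_sum_mul_dist_le_l1_norm_of_chain_general {V : Type*} (Y : SimpleGraph V)
    (a b : V) (N : ℕ) (p : Fin N → Y.Walk a b) (α : Fin N → ℂ) :
    ‖∑ j, α j‖ * (Y.dist a b : ℝ) ≤
      (1 / 2) * ∑' x : V × V, ‖∑ j, α j * walkChain (p j) x‖ := by
  set s := univ.biUnion fun j => (p j).chainSupport
  have hs : ∀ j, (p j).chainSupport ⊆ s := fun j =>
    subset_biUnion_of_mem (fun j => (p j).chainSupport) (mem_univ j)
  set f : V → ℂ := fun v => (Y.dist a v : ℂ)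
  have hpair : ∑ x ∈ s, (∑ j, α j * walkChain (p j) x) * (f x.2 - f x.1) =
      2 * (∑ j, α j) * Y.dist a b := calc
    _ = ∑ j, α j * ∑ x ∈ s, walkChain (p j) x * (f x.2 - f x.1) := by
      simp only [sum_mul, mul_sum, mul_assoc]
      exact sum_comm
    _ = ∑ j, α j * (2 * (f b - f a)) :=
      sum_congr rfl fun j _ => by rw [Walk.sum_walkChain_mul_sub _ _ (hs j)]
    _ = 2 * (∑ j, α j) * Y.dist a b := by
      simp [f, ← sum_mul]
      ring
  have hlip : ∀ x ∈ s, ‖f x.2 - f x.1‖ ≤ 1 := fun x hx => by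
    obtain ⟨j, -, hj⟩ := mem_biUnion.1 hx
    simpa [f, ← Complex.ofReal_natCast, ← Complex.ofReal_sub] using
      (Walk.adj_of_mem_chainSupport hj).abs_dist_sub_dist_le_one a
  have hsupp : ∀ x ∉ s, ‖∑ j, α j * walkChain (p j) x‖ = 0 := fun x hx => by
    simp [Walk.walkChain_eq_zero_of_notMem_chainSupport fun h => hx (hs _ h)]
  have hbound := norm_sum_mul_le_sum_norm (c := fun x => ∑ j, α j * walkChain (p j) x) hlip
  rw [hpair, norm_mul, norm_mul, Complex.norm_two, Complex.norm_natCast] at hbound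
  rw [tsum_eq_sum hsupp]
  linarith

/-- If `p₁, …, p_N` are paths from `a` to `b` regarded as 1-chains and `α₁, …, α_N` are complex
numbers, then `|Σ αⱼ| ⬝ d_Y(a,b) ≤ ‖Σ αⱼ pⱼ‖₁`.  The factor `1/2` appears because each edge
is counted with both orientations in the sum over `V × V`. -/
theorem abs_sum_mul_dist_le_l1_norm_of_chain {V : Type*} (Y : SimpleGraph V)
    (hY : Y.Connected) (a b : V) (N : ℕ) (p : Fin N → Y.Walk a b) (α : Fin N → ℂ) :
    ‖∑ j, α j‖ * (Y.dist a b : ℝ) ≤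
      (1 / 2) * ∑' x : V × V, ‖∑ j, α j * walkChain (p j) x‖ :=
  abs_sum_mul_dist_le_l1_norm_of_chain_general Y a b N p α
end

section
/- Let G be a group, H ≤ G, r : H → ℓ²(H) an array into the left regular representation, and r̃(f,g) = λ_G(f) r(f⁻¹g) for f⁻¹g ∈ H (0 otherwise). Then for every g ∈ H, sup_{h ∈ H} ‖r̃(g, h) - r̃(1, h)‖₂ = sup_{h ∈ H} ‖r̃(1, h) - r̃(1, hg)‖₂, and both are finite. -/
/-
Writing `λ` for left translation, antisymmetry `λ(a) r(a⁻¹) = -r(a)` rewrites both terms of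
`r̃(g, h) - r̃(1, h) = λ(g) r(g⁻¹h) - r(h)` as `λ(h)` applied to `r(h⁻¹) - r(h⁻¹g)
= r̃(1, h⁻¹) - r̃(1, h⁻¹g)`. Since `λ(h)` is an isometry and `h ↦ h⁻¹` is a bijection of `H`,
the two families of norms have the same range, hence the same supremum. The first family is
bounded because, up to sign, it is the family `r(gk) - λ(g) r(k)` with `k = g⁻¹h`.
-/

open scoped Classical Pointwise

/-- The ℓ²-norm of a function on a group. -/
noncomputable def l2norm {G : Type*} (f : G → ℂ) : ℝ := Real.sqrt (∑' x, ‖f x‖ ^ 2)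

/-- `rt r f g = λ_G(f) r(f⁻¹ g)` when `f⁻¹ g ∈ H`, and `0` otherwise, where `r : H → ℓ²(H) ⊆ ℓ²(G)`
is given as a map `G → (G → ℂ)` (only its values on `H` matter). -/
noncomputable def rt {G : Type*} [Group G] (H : Subgroup G) (r : G → G → ℂ) (f g : G) : G → ℂ :=
  if f⁻¹ * g ∈ H then fun x => r (f⁻¹ * g) (f⁻¹ * x) else 0

/-- The constant `K_g = sup_{h ∈ H} ‖r̃(g,h) - r̃(1,h)‖₂`. -/
noncomputable def Kc {G : Type*} [Group G] (H : Subgroup G) (r : G → G → ℂ) (g : G) : ℝ :=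
  sSup (Set.range fun h : H => l2norm (fun x => rt H r g h x - rt H r 1 h x))

section L2norm

variable {G : Type*}

lemma l2norm_sub_comm (f f' : G → ℂ) :
    l2norm (fun x => f x - f' x) = l2norm (fun x => f' x - f x) := by
  simp only [l2norm, norm_sub_rev]

lemma l2norm_comp_mul_left [Group G] (f : G → ℂ) (a : G) :
    l2norm (fun x => f (a * x)) = l2norm f :=
  congrArg Real.sqrt <| (Equiv.mulLeft a).tsum_eq fun x => ‖f x‖ ^ 2

end L2norm

section Rt

variable {G : Type*} [Group G] {H : Subgroup G} {r : G → G → ℂ}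

lemma rt_of_mem {f a : G} (h : f⁻¹ * a ∈ H) :
    rt H r f a = fun x => r (f⁻¹ * a) (f⁻¹ * x) :=
  if_pos h

lemma rt_one_of_mem {a : G} (ha : a ∈ H) : rt H r 1 a = r a := by
  rw [rt_of_mem (by rwa [inv_one, one_mul])]
  simp only [inv_one, one_mul]

lemma apply_eq_neg_of_anti (hanti : ∀ h ∈ H, (fun x => r h⁻¹ (h⁻¹ * x)) = fun x => -(r h x))
    {a : G} (ha : a ∈ H) (x : G) : r a x = -r a⁻¹ (a⁻¹ * x) :=
  neg_eq_iff_eq_neg.mp (congrFun (hanti a ha) x).symm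

lemma l2norm_rt_sub_rt_one
    (hanti : ∀ h ∈ H, (fun x => r h⁻¹ (h⁻¹ * x)) = fun x => -(r h x))
    {g h : G} (hg : g ∈ H) (hh : h ∈ H) :
    l2norm (fun x => rt H r g h x - rt H r 1 h x) =
      l2norm (fun x => rt H r 1 h⁻¹ x - rt H r 1 (h⁻¹ * g) x) := by
  have hgh : g⁻¹ * h ∈ H := mul_mem (inv_mem hg) hh
  have hhg : h⁻¹ * g ∈ H := mul_mem (inv_mem hh) hg
  rw [rt_of_mem hgh, rt_one_of_mem hh, rt_one_of_mem (inv_mem hh), rt_one_of_mem hhg,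
    ← l2norm_comp_mul_left (fun x => r h⁻¹ x - r (h⁻¹ * g) x) h⁻¹]
  congr 1
  funext x
  dsimp only
  rw [apply_eq_neg_of_anti hanti hgh, apply_eq_neg_of_anti hanti hh]
  simp only [mul_inv_rev, inv_inv, mul_assoc, mul_inv_cancel_left]
  ring

lemma range_l2norm_rt_sub_rt_one
    (hanti : ∀ h ∈ H, (fun x => r h⁻¹ (h⁻¹ * x)) = fun x => -(r h x))
    {g : G} (hg : g ∈ H) :
    Set.range (fun h : H => l2norm (fun x => rt H r g h x - rt H r 1 h x)) =
      Set.range (fun h : H => l2norm (fun x => rt H r 1 h x - rt H r 1 ((h : G) * g) x)) := by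
  rw [← (Equiv.inv H).surjective.range_comp
    fun h : H => l2norm (fun x => rt H r 1 h x - rt H r 1 ((h : G) * g) x)]
  congr 1
  funext h
  exact l2norm_rt_sub_rt_one hanti hg h.2

lemma bddAbove_range_l2norm_rt_sub_rt_one
    (hbdd : ∀ h ∈ H, ∃ C : ℝ, ∀ k ∈ H, l2norm (fun x => r (h * k) x - r k (h⁻¹ * x)) ≤ C)
    {g : G} (hg : g ∈ H) :
    BddAbove (Set.range fun h : H => l2norm (fun x => rt H r g h x - rt H r 1 h x)) := by
  obtain ⟨C, hC⟩ := hbdd g hg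
  refine ⟨C, ?_⟩
  rintro _ ⟨⟨h, hh⟩, rfl⟩
  have hgh : g⁻¹ * h ∈ H := mul_mem (inv_mem hg) hh
  simpa only [rt_of_mem hgh, rt_one_of_mem hh, mul_inv_cancel_left, l2norm_sub_comm (r h)]
    using hC _ hgh

end Rt

section Array

variable {G : Type*} [Group G] (H : Subgroup G) (r : G → G → ℂ)
theorem rt_sup_eq_and_finite
    (hanti : ∀ h ∈ H, (fun x => r h⁻¹ (h⁻¹ * x)) = fun x => -(r h x))
    (hbdd : ∀ h ∈ H, ∃ C : ℝ, ∀ k ∈ H, l2norm (fun x => r (h * k) x - r k (h⁻¹ * x)) ≤ C)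
    (g : G) (hg : g ∈ H) :
    sSup (Set.range fun h : H => l2norm (fun x => rt H r g h x - rt H r 1 h x)) =
      sSup (Set.range fun h : H => l2norm (fun x => rt H r 1 h x - rt H r 1 ((h : G) * g) x)) ∧
    BddAbove (Set.range fun h : H => l2norm (fun x => rt H r g h x - rt H r 1 h x)) ∧
    BddAbove (Set.range fun h : H => l2norm (fun x => rt H r 1 h x - rt H r 1 ((h : G) * g) x)) := by
  have hrange := range_l2norm_rt_sub_rt_one hanti hg
  have hbdd' := bddAbove_range_l2norm_rt_sub_rt_one hbdd hg
  exact ⟨congrArg sSup hrange, hbdd', hrange ▸ hbdd'⟩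

end Array
end
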